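/- Define h(z,x,y) = Σ_{k≥0} (−1)^k q^{k(k−1)/2} ∏_{j=0}^{k−1}(x+q^j y)/∏_{j=1}^{k}(1−q^j) · z^k and let F(z,x,y) = h(qz,x,y)/h(z,x,y) (well-defined since h has constant term 1). Then F satisfies F(z,x,y) = 1 + xz·F(z,x,y) + yz·F(z,x,y)·F(qz,x,y). -/

import Mathlib

noncomputable section
open PowerSeries Finset

/-- The field `ℚ(q, x, y)` of rational functions in three indeterminates. -/
abbrev K : Type := FractionRing (MvPolynomial (Fin 3) ℚ)

/-- The indeterminate `q`. -/
def q : K := algebraMap (MvPolynomial (Fin 3) ℚ) K (MvPolynomial.X 0)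
/-- The indeterminate `x`. -/
def x : K := algebraMap (MvPolynomial (Fin 3) ℚ) K (MvPolynomial.X 1)
/-- The indeterminate `y`. -/
def y : K := algebraMap (MvPolynomial (Fin 3) ℚ) K (MvPolynomial.X 2)

/-- The coefficient `h_k(a,b) = (−1)^k q^{k(k−1)/2} ∏_{j=0}^{k−1}(a+q^j b) / ∏_{j=1}^{k}(1−q^j)`. -/
def hk (a b : K) (k : ℕ) : K :=
  (-1) ^ k * q ^ (k.choose 2) * (∏ j ∈ range k, (a + q ^ j * b)) /
    (∏ j ∈ range k, (1 - q ^ (j + 1)))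

/-- The series `h(z,a,b) = Σ_k h_k(a,b) z^k`. -/
def hser (a b : K) : PowerSeries K := PowerSeries.mk (hk a b)

/-!
The series `h(z) = h(z,a,b)` satisfies the `q`-difference equation
`h(qz) = h(z) + a z h(qz) + b z h(q²z)`: comparing coefficients of `z^(k+1)`, this is the
recurrence `(1 - q^(k+1)) h_(k+1) = -q^k (a + q^k b) h_k`, read off from the product formula.
Dividing by `h(z)`, and using that rescaling commutes with inversion, turns it into the
equation for `F(z) = h(qz)/h(z)`, since `F(z) F(qz) = h(q²z)/h(z)`.
-/

namespace PowerSeries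

theorem constantCoeff_rescale {R : Type*} [CommSemiring R] (c : R) (φ : R⟦X⟧) :
    constantCoeff (rescale c φ) = constantCoeff φ := by
  rw [← coeff_zero_eq_constantCoeff_apply, coeff_rescale, pow_zero, one_mul,
    coeff_zero_eq_constantCoeff_apply]

variable {k : Type*} [Field k]

theorem rescale_inv (c : k) (φ : k⟦X⟧) : rescale c φ⁻¹ = (rescale c φ)⁻¹ := by
  by_cases hφ : constantCoeff φ = 0
  · rw [inv_eq_zero.mpr hφ, inv_eq_zero.mpr (by rwa [constantCoeff_rescale]), map_zero]
  · rw [eq_inv_iff_mul_eq_one (by rwa [constantCoeff_rescale]), ← map_mul,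
      PowerSeries.inv_mul_cancel _ hφ, map_one]

theorem rescale_mul_inv_eq_of_rescale_eq {c a b : k} {φ : k⟦X⟧} (hφ : constantCoeff φ ≠ 0)
    (h : rescale c φ = φ + C a * X * rescale c φ + C b * X * rescale c (rescale c φ)) :
    rescale c φ * φ⁻¹ =
      1 + C a * X * (rescale c φ * φ⁻¹)
        + C b * X * (rescale c φ * φ⁻¹ * rescale c (rescale c φ * φ⁻¹)) := by
  have hrφ : (rescale c φ)⁻¹ * rescale c φ = 1 :=
    PowerSeries.inv_mul_cancel _ (by rwa [constantCoeff_rescale])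
  have hF : rescale c φ * φ⁻¹ * rescale c (rescale c φ * φ⁻¹) =
      rescale c (rescale c φ) * φ⁻¹ := by
    rw [map_mul, rescale_inv]
    linear_combination (rescale c (rescale c φ) * φ⁻¹) * hrφ
  rw [hF]
  linear_combination φ⁻¹ * h + PowerSeries.mul_inv_cancel φ hφ

end PowerSeries

theorem q_pow_ne_one {m : ℕ} (hm : m ≠ 0) : q ^ m ≠ 1 := by
  intro h
  rw [q, ← map_pow, ← map_one (algebraMap (MvPolynomial (Fin 3) ℚ) K)] at h
  have h0 := congrArg MvPolynomial.constantCoeff (IsFractionRing.injective _ K h)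
  rw [map_pow, map_one, MvPolynomial.constantCoeff_X, zero_pow hm] at h0
  exact zero_ne_one h0

theorem one_sub_q_pow_succ_ne_zero (j : ℕ) : 1 - q ^ (j + 1) ≠ 0 :=
  sub_ne_zero.mpr (q_pow_ne_one j.succ_ne_zero).symm

theorem hk_zero (a b : K) : hk a b 0 = 1 := by simp [hk]

theorem hk_succ (a b : K) (k : ℕ) :
    (1 - q ^ (k + 1)) * hk a b (k + 1) = -(q ^ k * (a + q ^ k * b)) * hk a b k := by
  have hchoose : (k + 1).choose 2 = k.choose 2 + k := by
    simp [Nat.choose_succ_succ, Nat.add_comm]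
  have hden : ∏ j ∈ range k, (1 - q ^ (j + 1)) ≠ 0 :=
    prod_ne_zero_iff.mpr fun j _ => one_sub_q_pow_succ_ne_zero j
  unfold hk
  rw [prod_range_succ, prod_range_succ, hchoose]
  generalize ∏ j ∈ range k, (a + q ^ j * b) = P
  field_simp [one_sub_q_pow_succ_ne_zero k]
  ring

theorem constantCoeff_hser (a b : K) : constantCoeff (hser a b) = 1 := by
  rw [← coeff_zero_eq_constantCoeff_apply, hser, coeff_mk, hk_zero]

theorem rescale_hser (a b : K) :
    rescale q (hser a b) =
      hser a b + C a * X * rescale q (hser a b) + C b * X * rescale q (rescale q (hser a b)) := by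
  ext n
  rw [mul_assoc, mul_assoc]
  cases n with
  | zero => simp [coeff_rescale, hser, hk_zero]
  | succ k =>
    simp only [map_add, coeff_C_mul, coeff_succ_X_mul, coeff_rescale, rescale_rescale, hser,
      coeff_mk]
    linear_combination -hk_succ a b k

/-- With `F(z,x,y) = h(qz,x,y)/h(z,x,y)` (well-defined as `h` has constant term `1`),
`F` satisfies `F(z) = 1 + xz·F(z) + yz·F(z)·F(qz)`. -/
theorem F_quotient_functional_equation :
    rescale q (hser x y) * (hser x y)⁻¹ =
      1 + C x * X * (rescale q (hser x y) * (hser x y)⁻¹)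
        + C y * X * ((rescale q (hser x y) * (hser x y)⁻¹) *
            rescale q (rescale q (hser x y) * (hser x y)⁻¹)) :=
  rescale_mul_inv_eq_of_rescale_eq (by rw [constantCoeff_hser]; exact one_ne_zero)
    (rescale_hser x y)

end
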